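/- Pivot-based pruning correctness: let G ⊆ I with |G| ≥ minRow, j a column, p₁ the minRow-th smallest and p₂ the minRow-th largest value of {a_{gj} : g∈G}. If a row i ∈ I∖G is such that neither p₁ − a_{ij} ≤ ε nor a_{ij} − p₂ ≤ ε holds, then no subset G' ⊆ G with |G'| ≥ minRow satisfies max over G'∪{i} minus min over G'∪{i} of column j ≤ ε. -/

import Mathlib

theorem pivot_pruning_correct {α : Type*} [DecidableEq α]
    (G : Finset α) (f : α → ℝ) (minRow : ℕ) (hmin : 1 ≤ minRow)
    (hcard : minRow ≤ G.card) (ε : ℝ) (hε : 0 ≤ ε)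
    (l : List ℝ) (hl : l = (G.val.map f).sort (· ≤ ·))
    (p₁ p₂ : ℝ) (hp₁ : p₁ = l[minRow - 1]!) (hp₂ : p₂ = l[l.length - minRow]!)
    (v : ℝ) (hv : ¬ (p₁ - v ≤ ε ∨ v - p₂ ≤ ε)) :
    ∀ G' : Finset α, G' ⊆ G → minRow ≤ G'.card → ∀ hG' : G'.Nonempty,
      ε < max v (G'.sup' hG' f) - min v (G'.inf' hG' f) := by
  intro G' hsub hcard' hG'
  push_neg at hv
  obtain ⟨h1, h2⟩ := hv
  have hlen : l.length = G.card := by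
    rw [hl]; simp [Multiset.length_sort]
  have hlt : l.length - minRow < l.length := by omega
  have hp₂' : p₂ = l[l.length - minRow] := by
    rw [hp₂, getElem!_pos l _ hlt]
  have hsorted : l.Pairwise (· ≤ ·) := by
    rw [hl]; exact Multiset.pairwise_sort _ _
  set k := l.length - minRow with hk
  -- every element at index ≤ k is ≤ p₂
  have hidx : ∀ i (h : i < l.length), i ≤ k → l[i] ≤ p₂ := by
    intro i h hik
    rw [hp₂']
    rcases eq_or_lt_of_le hik with rfl | hlt'
    · rfl
    · exact List.pairwise_iff_getElem.mp hsorted i k h hlt hlt'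
  -- count of elements > p₂ in l is ≤ minRow - 1
  have hcountl : l.countP (fun x => decide (p₂ < x)) ≤ minRow - 1 := by
    have hsplit : l = l.take (k+1) ++ l.drop (k+1) := (List.take_append_drop _ _).symm
    have htake : (l.take (k+1)).countP (fun x => decide (p₂ < x)) = 0 := by
      rw [List.countP_eq_zero]
      intro x hx
      rw [List.mem_take_iff_getElem] at hx
      obtain ⟨i, hi, rfl⟩ := hx
      simp only [decide_eq_true_eq, not_lt]
      exact hidx i (lt_of_lt_of_le hi (by omega)) (by omega)
    calc l.countP (fun x => decide (p₂ < x))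
        = (l.take (k+1)).countP _ + (l.drop (k+1)).countP _ := by
          conv_lhs => rw [hsplit]
          rw [List.countP_append]
      _ ≤ 0 + (l.drop (k+1)).length := by
          rw [htake]; exact Nat.add_le_add_left List.countP_le_length 0
      _ ≤ minRow - 1 := by rw [List.length_drop]; omega
  have hcountm : (G.val.map f).countP (fun x => decide (p₂ < x)) ≤ minRow - 1 := by
    have : (G.val.map f) = (↑l : Multiset ℝ) := by rw [hl, Multiset.sort_eq]
    rw [this, Multiset.coe_countP]
    simpa using hcountl
  -- there is g ∈ G' with f g ≤ p₂
  have hex : ∃ g ∈ G', f g ≤ p₂ := by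
    by_contra h
    push_neg at h
    have hall : (G'.val.map f).countP (fun x => decide (p₂ < x)) = (G'.val.map f).card := by
      apply Multiset.countP_eq_card.mpr
      intro x hx
      rw [Multiset.mem_map] at hx
      obtain ⟨g, hg, rfl⟩ := hx
      simpa using h g hg
    have hle : (G'.val.map f).countP (fun x => decide (p₂ < x)) ≤
        (G.val.map f).countP (fun x => decide (p₂ < x)) :=
      Multiset.countP_le_of_le _ (Multiset.map_le_map (Finset.val_le_iff.mpr hsub))
    have hc : (G'.val.map f).card = G'.card := by simp
    omega
  obtain ⟨g, hg, hfg⟩ := hex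
  have hinf : G'.inf' hG' f ≤ p₂ := le_trans (Finset.inf'_le f hg) hfg
  have hmin' : min v (G'.inf' hG' f) ≤ p₂ := le_trans (min_le_right _ _) hinf
  have hmax : v ≤ max v (G'.sup' hG' f) := le_max_left _ _
  linarith
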